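/- Let V = V_k ⊗ W where V_k = S^k(ℝ²) is the irreducible sl(2,ℝ)-module with basis v⁰,…,v^k and W = ℝ^m, and let 𝔞 = sl(2,ℝ) × gl(m,ℝ) ⊂ gl(V). If m ≥ 3 and k ≥ 3, then the second Spencer operator ∂² : Hom(Λ²V, 𝔞) → Hom(Λ³V, V), (∂²φ)(v₁∧v₂∧v₃) = −φ(v₂∧v₃)v₁ + φ(v₁∧v₃)v₂ − φ(v₁∧v₂)v₃, is injective. -/
import Mathlib


/-- The basis vector `v^i ⊗ e_j` of `V = V_k ⊗ W`, modelled as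
`Fin (k+1) → Fin m → ℝ`. -/
noncomputable def basisVec (k m : ℕ) (i : Fin (k + 1)) (j : Fin m) :
    Fin (k + 1) → Fin m → ℝ :=
  Pi.single i (Pi.single j 1)

noncomputable def coefF {m : ℕ} (k : ℕ) (a b c : ℝ) (A : Matrix (Fin m) (Fin m) ℝ)
    (i i' : ℕ) (j j' : Fin m) : ℝ :=
  (if i + 1 = i' ∧ (j:ℕ) = (j':ℕ) ∧ i < k then a else 0)
  + (if i = i' ∧ (j:ℕ) = (j':ℕ) then b * ((k : ℝ) - 2 * (i : ℝ)) else 0)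
  + (if i' + 1 = i ∧ (j:ℕ) = (j':ℕ) then c * ((i : ℝ) * ((k : ℝ) + 1 - (i : ℝ))) else 0)
  + (if i = i' then A j' j else 0)

lemma Ecoord (k m : ℕ) (p i' : Fin (k+1)) (q j' : Fin m) :
    basisVec k m p q i' j' = if (p:ℕ) = (i':ℕ) ∧ (q:ℕ) = (j':ℕ) then 1 else 0 := by
  simp only [basisVec, Pi.single_apply, Fin.val_eq_val]
  by_cases h1 : p = i' <;> by_cases h2 : q = j' <;>
    simp [h1, h2, eq_comm, Pi.single_apply]

lemma pick_lt3 (a b : ℕ) : ∃ t, t < 3 ∧ t ≠ a ∧ t ≠ b :=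
  if h1 : 0 ≠ a ∧ 0 ≠ b then ⟨0, by omega⟩
  else if h2 : 1 ≠ a ∧ 1 ≠ b then ⟨1, by omega⟩
  else ⟨2, by omega⟩

lemma pickA (a b : ℕ) : ∃ t, t < 3 ∧ t + 1 ≠ a ∧ t + 1 ≠ b :=
  if h1 : (1:ℕ) ≠ a ∧ 1 ≠ b then ⟨0, by omega⟩
  else if h2 : (2:ℕ) ≠ a ∧ 2 ≠ b then ⟨1, by omega⟩
  else ⟨2, by omega⟩

lemma pick4 (a b : ℕ) : ∃ s t, s < 4 ∧ t < 4 ∧ s ≠ t ∧ s ≠ a ∧ s ≠ b ∧ t ≠ a ∧ t ≠ b := by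
  obtain ⟨s, hs⟩ := pick_lt3 a b
  have h : ∃ t, t < 4 ∧ t ≠ a ∧ t ≠ b ∧ t ≠ s :=
    if h0 : (0:ℕ) ≠ a ∧ 0 ≠ b ∧ 0 ≠ s then ⟨0, by omega⟩
    else if h1 : (1:ℕ) ≠ a ∧ 1 ≠ b ∧ 1 ≠ s then ⟨1, by omega⟩
    else if h2 : (2:ℕ) ≠ a ∧ 2 ≠ b ∧ 2 ≠ s then ⟨2, by omega⟩
    else ⟨3, by omega⟩
  obtain ⟨t, ht⟩ := h
  exact ⟨s, t, by omega, by omega, by omega, by omega, by omega, by omega, by omega⟩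

lemma pickColFin {m : ℕ} (hm : 3 ≤ m) (j₁ j₂ : Fin m) :
    ∃ j₃ : Fin m, ¬((j₁:ℕ) = (j₃:ℕ)) ∧ ¬((j₂:ℕ) = (j₃:ℕ)) := by
  obtain ⟨s, hs, h1, h2⟩ := pick_lt3 (j₁:ℕ) (j₂:ℕ)
  exact ⟨⟨s, by omega⟩, by simp; omega, by simp; omega⟩

lemma pickRowSucc {k : ℕ} (hk : 3 ≤ k) (i₁ i₂ : Fin (k+1)) :
    ∃ T T' : Fin (k+1), (T':ℕ) = (T:ℕ)+1 ∧ (T:ℕ) < k ∧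
      ¬((i₁:ℕ) = (T:ℕ)+1) ∧ ¬((i₂:ℕ) = (T:ℕ)+1) := by
  obtain ⟨t, ht, h1, h2⟩ := pickA (i₁:ℕ) (i₂:ℕ)
  exact ⟨⟨t, by omega⟩, ⟨t+1, by omega⟩, by simp, by simp; omega, by simp; omega, by simp; omega⟩

lemma pickRowSucc' {k : ℕ} (hk : 3 ≤ k) (i₁ i₂ : Fin (k+1)) :
    ∃ T T' : Fin (k+1), (T':ℕ) = (T:ℕ)+1 ∧ (T:ℕ) < k ∧
      ¬((i₁:ℕ) = (T:ℕ)) ∧ ¬((i₂:ℕ) = (T:ℕ)) := by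
  obtain ⟨t, ht, h1, h2⟩ := pick_lt3 (i₁:ℕ) (i₂:ℕ)
  exact ⟨⟨t, by omega⟩, ⟨t+1, by omega⟩, by simp, by simp; omega, by simp; omega, by simp; omega⟩

lemma pickRow2 {k : ℕ} (hk : 3 ≤ k) (i₁ i₂ : Fin (k+1)) :
    ∃ P Q : Fin (k+1), ¬((P:ℕ) = (Q:ℕ)) ∧ ¬((i₁:ℕ) = (P:ℕ)) ∧ ¬((i₂:ℕ) = (P:ℕ)) ∧
      ¬((i₁:ℕ) = (Q:ℕ)) ∧ ¬((i₂:ℕ) = (Q:ℕ)) := by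
  obtain ⟨p, q, hp4, hq4, hpq, h1, h2, h3, h4⟩ := pick4 (i₁:ℕ) (i₂:ℕ)
  exact ⟨⟨p, by omega⟩, ⟨q, by omega⟩, by simp; omega, by simp; omega, by simp; omega,
    by simp; omega, by simp; omega⟩

section Act
variable {k m : ℕ}
variable (X H Y : Module.End ℝ (Fin (k + 1) → Fin m → ℝ))
variable (ι : Matrix (Fin m) (Fin m) ℝ →ₗ[ℝ] Module.End ℝ (Fin (k + 1) → Fin m → ℝ))

lemma actX (hX : ∀ (i : Fin (k + 1)) (j : Fin m), X (basisVec k m i j) =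
      if h : (i : ℕ) < k then basisVec k m (⟨(i : ℕ) + 1, by omega⟩ : Fin (k + 1)) j else 0)
    (i i' : Fin (k+1)) (j j' : Fin m) :
    X (basisVec k m i j) i' j' =
      if (i:ℕ) + 1 = (i':ℕ) ∧ (j:ℕ) = (j':ℕ) ∧ (i:ℕ) < k then (1:ℝ) else 0 := by
  rw [hX]
  by_cases h : (i:ℕ) < k
  · simp only [dif_pos h, Ecoord]
    split_ifs <;> simp_all
  · simp only [dif_neg h]
    have hc : ¬((i:ℕ) + 1 = (i':ℕ) ∧ (j:ℕ) = (j':ℕ) ∧ (i:ℕ) < k) := by tauto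
    simp [hc]

lemma actH (hH : ∀ (i : Fin (k + 1)) (j : Fin m), H (basisVec k m i j) =
      ((k : ℝ) - 2 * (i : ℕ)) • basisVec k m i j)
    (i i' : Fin (k+1)) (j j' : Fin m) :
    H (basisVec k m i j) i' j' =
      if (i:ℕ) = (i':ℕ) ∧ (j:ℕ) = (j':ℕ) then ((k : ℝ) - 2 * ((i:ℕ) : ℝ)) else 0 := by
  rw [hH]
  simp only [Pi.smul_apply, smul_eq_mul, Ecoord]
  split_ifs <;> simp_all

lemma actY (hY : ∀ (i : Fin (k + 1)) (j : Fin m), Y (basisVec k m i j) =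
      if h : 0 < (i : ℕ) then
        (((i : ℕ) : ℝ) * ((k : ℝ) + 1 - (i : ℕ))) •
          basisVec k m (⟨(i : ℕ) - 1, by omega⟩ : Fin (k + 1)) j else 0)
    (i i' : Fin (k+1)) (j j' : Fin m) :
    Y (basisVec k m i j) i' j' =
      if (i':ℕ) + 1 = (i:ℕ) ∧ (j:ℕ) = (j':ℕ)
        then (((i:ℕ) : ℝ) * ((k : ℝ) + 1 - ((i:ℕ) : ℝ))) else 0 := by
  rw [hY]
  by_cases h : 0 < (i:ℕ)
  · simp only [dif_pos h, Pi.smul_apply, smul_eq_mul, Ecoord]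
    split_ifs <;> simp_all <;> omega
  · simp only [dif_neg h]
    have hc : ¬((i':ℕ) + 1 = (i:ℕ) ∧ (j:ℕ) = (j':ℕ)) := by omega
    simp [hc]

lemma actI (hι : ∀ (A : Matrix (Fin m) (Fin m) ℝ) (i : Fin (k + 1)) (j : Fin m),
      ι A (basisVec k m i j) = ∑ l : Fin m, A l j • basisVec k m i l)
    (A : Matrix (Fin m) (Fin m) ℝ) (i i' : Fin (k+1)) (j j' : Fin m) :
    ι A (basisVec k m i j) i' j' = if (i:ℕ) = (i':ℕ) then A j' j else 0 := by
  rw [hι]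
  simp only [Finset.sum_apply, Pi.smul_apply, smul_eq_mul, Ecoord]
  by_cases h : (i:ℕ) = (i':ℕ)
  · simp only [h, true_and, if_true]
    rw [Finset.sum_eq_single j']
    · simp
    · intro l _ hl
      have hne : ¬((l:ℕ) = (j':ℕ)) := fun hh => hl (Fin.ext hh)
      simp [hne]
    · simp
  · simp [h]

lemma act (hX : ∀ (i : Fin (k + 1)) (j : Fin m), X (basisVec k m i j) =
      if h : (i : ℕ) < k then basisVec k m (⟨(i : ℕ) + 1, by omega⟩ : Fin (k + 1)) j else 0)
    (hH : ∀ (i : Fin (k + 1)) (j : Fin m), H (basisVec k m i j) =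
      ((k : ℝ) - 2 * (i : ℕ)) • basisVec k m i j)
    (hY : ∀ (i : Fin (k + 1)) (j : Fin m), Y (basisVec k m i j) =
      if h : 0 < (i : ℕ) then
        (((i : ℕ) : ℝ) * ((k : ℝ) + 1 - (i : ℕ))) •
          basisVec k m (⟨(i : ℕ) - 1, by omega⟩ : Fin (k + 1)) j else 0)
    (hι : ∀ (A : Matrix (Fin m) (Fin m) ℝ) (i : Fin (k + 1)) (j : Fin m),
      ι A (basisVec k m i j) = ∑ l : Fin m, A l j • basisVec k m i l)
    (a b c : ℝ) (A : Matrix (Fin m) (Fin m) ℝ) (i i' : Fin (k+1)) (j j' : Fin m) :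
    ((a • X + b • H + c • Y + ι A) (basisVec k m i j)) i' j' =
      coefF k a b c A (i:ℕ) (i':ℕ) j j' := by
  simp only [LinearMap.add_apply, LinearMap.smul_apply, Pi.add_apply, Pi.smul_apply,
    smul_eq_mul, actX X hX, actH H hH, actY Y hY, actI ι hι, coefF,
    mul_ite, mul_one, mul_zero]
end Act

lemma basis_repr (k m : ℕ) (f : Fin (k+1) → Fin m → ℝ) :
    f = ∑ i : Fin (k+1), ∑ j : Fin m, f i j • basisVec k m i j := by
  funext p q
  symm
  simp only [Finset.sum_apply, Pi.smul_apply, smul_eq_mul, Ecoord]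
  rw [Finset.sum_eq_single p]
  · rw [Finset.sum_eq_single q]
    · simp
    · intro l _ hl
      have hne : ¬((l:ℕ) = (q:ℕ)) := fun hh => hl (Fin.ext hh)
      simp [hne]
    · simp
  · intro i _ hi
    have hne : ¬((i:ℕ) = (p:ℕ)) := fun hh => hi (Fin.ext hh)
    simp [hne]
  · simp


/-- Let `V = V_k ⊗ W` with `V_k = S^k(ℝ²)`, `W = ℝ^m`, and
`𝔞 = sl(2,ℝ) × gl(m,ℝ) ⊂ gl(V)` (the span of the `sl(2)`-generators `X, H, Y`
together with the range of `ι : gl(m,ℝ) → gl(V)`).  If `m ≥ 3` and `k ≥ 3`, then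
the second Spencer operator
`∂² : Hom(Λ²V, 𝔞) → Hom(Λ³V, V)`,
`(∂²φ)(v₁∧v₂∧v₃) = −φ(v₂∧v₃)v₁ + φ(v₁∧v₃)v₂ − φ(v₁∧v₂)v₃`, is injective;
i.e. any alternating `𝔞`-valued bilinear map `φ` with `∂²φ = 0` vanishes. -/
theorem second_spencer_injective (k m : ℕ) (hk : 3 ≤ k) (hm : 3 ≤ m)
    (X H Y : Module.End ℝ (Fin (k + 1) → Fin m → ℝ))
    (ι : Matrix (Fin m) (Fin m) ℝ →ₗ[ℝ] Module.End ℝ (Fin (k + 1) → Fin m → ℝ))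
    (hX : ∀ (i : Fin (k + 1)) (j : Fin m), X (basisVec k m i j) =
      if h : (i : ℕ) < k then basisVec k m (⟨(i : ℕ) + 1, by omega⟩ : Fin (k + 1)) j else 0)
    (hH : ∀ (i : Fin (k + 1)) (j : Fin m), H (basisVec k m i j) =
      ((k : ℝ) - 2 * (i : ℕ)) • basisVec k m i j)
    (hY : ∀ (i : Fin (k + 1)) (j : Fin m), Y (basisVec k m i j) =
      if h : 0 < (i : ℕ) then
        (((i : ℕ) : ℝ) * ((k : ℝ) + 1 - (i : ℕ))) •
          basisVec k m (⟨(i : ℕ) - 1, by omega⟩ : Fin (k + 1)) j else 0)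
    (hι : ∀ (A : Matrix (Fin m) (Fin m) ℝ) (i : Fin (k + 1)) (j : Fin m),
      ι A (basisVec k m i j) = ∑ l : Fin m, A l j • basisVec k m i l)
    (φ : (Fin (k + 1) → Fin m → ℝ) →ₗ[ℝ] (Fin (k + 1) → Fin m → ℝ) →ₗ[ℝ]
          Module.End ℝ (Fin (k + 1) → Fin m → ℝ))
    (hval : ∀ u v, φ u v ∈ Submodule.span ℝ ({X, H, Y} : Set (Module.End ℝ _)) ⊔
      LinearMap.range ι)
    (halt : ∀ u, φ u u = 0)
    (hspencer : ∀ u v w, -(φ v w u) + φ u w v - φ u v w = 0) :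
    φ = 0 := by
  -- decomposition of values of φ
  have decomp : ∀ u v, ∃ (a b c : ℝ) (A : Matrix (Fin m) (Fin m) ℝ), φ u v = a • X + b • H + c • Y + ι A := by
    intro u v
    rcases Submodule.mem_sup.mp (hval u v) with ⟨s, hs, r, hr, hsum⟩
    obtain ⟨A, rfl⟩ := hr
    rcases Submodule.mem_span_insert.mp hs with ⟨a, z, hz, rfl⟩
    rcases Submodule.mem_span_insert.mp hz with ⟨b, z2, hz2, rfl⟩
    rcases Submodule.mem_span_singleton.mp hz2 with ⟨c, rfl⟩
    exact ⟨a, b, c, A, by rw [← hsum]; simp only [add_assoc]⟩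
  choose aF bF cF AF hdec using decomp
  -- the Spencer identity in coordinates
  have spco : ∀ (i₁ i₂ i₃ i' : Fin (k+1)) (j₁ j₂ j₃ j' : Fin m),
      -(coefF k (aF (basisVec k m i₂ j₂) (basisVec k m i₃ j₃))
          (bF (basisVec k m i₂ j₂) (basisVec k m i₃ j₃))
          (cF (basisVec k m i₂ j₂) (basisVec k m i₃ j₃))
          (AF (basisVec k m i₂ j₂) (basisVec k m i₃ j₃)) (i₁:ℕ) (i':ℕ) j₁ j')
      + coefF k (aF (basisVec k m i₁ j₁) (basisVec k m i₃ j₃))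
          (bF (basisVec k m i₁ j₁) (basisVec k m i₃ j₃))
          (cF (basisVec k m i₁ j₁) (basisVec k m i₃ j₃))
          (AF (basisVec k m i₁ j₁) (basisVec k m i₃ j₃)) (i₂:ℕ) (i':ℕ) j₂ j'
      - coefF k (aF (basisVec k m i₁ j₁) (basisVec k m i₂ j₂))
          (bF (basisVec k m i₁ j₁) (basisVec k m i₂ j₂))
          (cF (basisVec k m i₁ j₁) (basisVec k m i₂ j₂))
          (AF (basisVec k m i₁ j₁) (basisVec k m i₂ j₂)) (i₃:ℕ) (i':ℕ) j₃ j' = 0 := by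
    intro i₁ i₂ i₃ i' j₁ j₂ j₃ j'
    have h := hspencer (basisVec k m i₁ j₁) (basisVec k m i₂ j₂) (basisVec k m i₃ j₃)
    have h2 := congrFun (congrFun h i') j'
    simp only [Pi.add_apply, Pi.sub_apply, Pi.neg_apply, Pi.zero_apply] at h2
    rw [hdec (basisVec k m i₂ j₂) (basisVec k m i₃ j₃),
        hdec (basisVec k m i₁ j₁) (basisVec k m i₃ j₃),
        hdec (basisVec k m i₁ j₁) (basisVec k m i₂ j₂)] at h2
    rw [act X H Y ι hX hH hY hι _ _ _ _ i₁ i' j₁ j',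
        act X H Y ι hX hH hY hι _ _ _ _ i₂ i' j₂ j',
        act X H Y ι hX hH hY hι _ _ _ _ i₃ i' j₃ j'] at h2
    exact h2
  -- Step A : the X-coefficients vanish
  have stepA : ∀ (i₁ i₂ : Fin (k+1)) (j₁ j₂ : Fin m),
      aF (basisVec k m i₁ j₁) (basisVec k m i₂ j₂) = 0 := by
    intro i₁ i₂ j₁ j₂
    obtain ⟨T, T', hTT', hTk, f3, f4⟩ := pickRowSucc hk i₁ i₂
    obtain ⟨j₃, f1, f2⟩ := pickColFin hm j₁ j₂
    have h := spco i₁ i₂ T T' j₁ j₂ j₃ j₃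
    have f6 : ¬((T:ℕ) + 1 + 1 = (T:ℕ)) := by omega
    simp only [coefF, hTT'] at h
    simp [f1, f2, f3, f4, hTk, f6] at h
    linarith
  -- Step C : the Y-coefficients vanish
  have stepC : ∀ (i₁ i₂ : Fin (k+1)) (j₁ j₂ : Fin m),
      cF (basisVec k m i₁ j₁) (basisVec k m i₂ j₂) = 0 := by
    intro i₁ i₂ j₁ j₂
    obtain ⟨T, T', hTT', hTk, f3, f4⟩ := pickRowSucc' hk i₁ i₂
    obtain ⟨j₃, f1, f2⟩ := pickColFin hm j₁ j₂
    have h := spco i₁ i₂ T' T j₁ j₂ j₃ j₃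
    have f5 : ¬((T:ℕ) + 1 + 1 = (T:ℕ)) := by omega
    have f6 : ¬((T:ℕ) + 1 = (T:ℕ)) := by omega
    simp only [coefF, hTT'] at h
    simp [f1, f2, f3, f4, f5, f6] at h
    rcases h with h | h | h
    · exact h
    · exfalso; have := Nat.cast_nonneg (α := ℝ) (T:ℕ); linarith
    · exfalso
      have hc : ((T:ℕ):ℝ) < (k:ℝ) := by exact_mod_cast hTk
      linarith
  -- Step B : the H-coefficients vanish
  have stepB : ∀ (i₁ i₂ : Fin (k+1)) (j₁ j₂ : Fin m),
      bF (basisVec k m i₁ j₁) (basisVec k m i₂ j₂) = 0 := by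
    intro i₁ i₂ j₁ j₂
    obtain ⟨P, Q, hPQ, g3, g4, g6, g7⟩ := pickRow2 hk i₁ i₂
    obtain ⟨j₃, f1, f2⟩ := pickColFin hm j₁ j₂
    have h1 := spco i₁ i₂ P P j₁ j₂ j₃ j₃
    have h2 := spco i₁ i₂ Q Q j₁ j₂ j₃ j₃
    have g5 : ¬((P:ℕ) + 1 = (P:ℕ)) := by omega
    have g8 : ¬((Q:ℕ) + 1 = (Q:ℕ)) := by omega
    simp only [coefF] at h1 h2
    simp [f1, f2, g3, g4, g5] at h1
    simp [f1, f2, g6, g7, g8] at h2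
    have hne : ((P:ℕ):ℝ) ≠ ((Q:ℕ):ℝ) := by
      intro hc; exact hPQ (by exact_mod_cast hc)
    have hmul : bF (basisVec k m i₁ j₁) (basisVec k m i₂ j₂) * (2 * ((Q:ℕ):ℝ) - 2 * ((P:ℕ):ℝ)) = 0 := by
      ring_nf
      ring_nf at h1 h2
      linarith
    rcases mul_eq_zero.mp hmul with h | h
    · exact h
    · exfalso
      have : ((P:ℕ):ℝ) = ((Q:ℕ):ℝ) := by linarith
      exact hne this
  -- Step D : the gl(m)-coefficients vanish
  have stepD : ∀ (i₁ i₂ : Fin (k+1)) (j₁ j₂ j' j₃ : Fin m),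
      AF (basisVec k m i₁ j₁) (basisVec k m i₂ j₂) j' j₃ = 0 := by
    intro i₁ i₂ j₁ j₂ j' j₃
    obtain ⟨P, Q, hPQ, g3, g4, g6, g7⟩ := pickRow2 hk i₁ i₂
    have h := spco i₁ i₂ P P j₁ j₂ j₃ j'
    have g5 : ¬((P:ℕ) + 1 = (P:ℕ)) := by omega
    simp only [coefF] at h
    simp [stepA, stepB, stepC, g3, g4, g5] at h
    linarith
  have pairzero : ∀ (i₁ i₂ : Fin (k+1)) (j₁ j₂ : Fin m),
      φ (basisVec k m i₁ j₁) (basisVec k m i₂ j₂) = 0 := by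
    intro i₁ i₂ j₁ j₂
    have hA : AF (basisVec k m i₁ j₁) (basisVec k m i₂ j₂) = 0 := by
      ext j' j₃
      exact stepD i₁ i₂ j₁ j₂ j' j₃
    rw [hdec, stepA, stepB, stepC, hA]
    simp
  have main : ∀ u v, φ u v = 0 := by
    intro u v
    conv_lhs => rw [basis_repr k m u, basis_repr k m v]
    simp [map_sum, LinearMap.sum_apply, map_smul, LinearMap.smul_apply, pairzero]
  exact LinearMap.ext fun u => LinearMap.ext fun v => by simp [main u v]
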